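/- The complex ω-Lie algebras B₁ and B₋₁, given on a basis {x,y,z} of a 3-dimensional complex vector space by [x,y] = y, [x,z] = y+z, [y,z] = x, ω(x,y) = ω(x,z) = 0, ω(y,z) = 2 for B₁, and by [x,y] = y, [x,z] = y+z, [y,z] = −x, ω(x,y) = ω(x,z) = 0, ω(y,z) = −2 for B₋₁, are isomorphic as complex ω-Lie algebras. -/

import Mathlib

/-!
Rescaling `y` and `z` by `i` does it: the relations `[x,y] = y`, `[x,z] = y + z` are linear in
`(y, z)` and survive, while `[y,z]` and `ω(y,z)` are quadratic in `(y, z)` and pick up the factor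
`i² = -1`, which is exactly the difference between `B₁` and `B₋₁`.
-/

/-- The bracket of `B₁` on `ℂ³`: the bilinear extension of `[x,y] = y`,
`[x,z] = y + z`, `[y,z] = x` on the standard basis `x = e₀, y = e₁, z = e₂`. -/
def brB1 (u v : Fin 3 → ℂ) : Fin 3 → ℂ :=
  ![u 1 * v 2 - u 2 * v 1, (u 0 * v 1 - u 1 * v 0) + (u 0 * v 2 - u 2 * v 0),
    u 0 * v 2 - u 2 * v 0]

/-- The form of `B₁`: the bilinear extension of `ω(x,y) = ω(x,z) = 0`, `ω(y,z) = 2`. -/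
def omB1 (u v : Fin 3 → ℂ) : ℂ := 2 * (u 1 * v 2 - u 2 * v 1)

/-- The bracket of `B₋₁` on `ℂ³`: the bilinear extension of `[x,y] = y`,
`[x,z] = y + z`, `[y,z] = -x`. -/
def brBm1 (u v : Fin 3 → ℂ) : Fin 3 → ℂ :=
  ![-(u 1 * v 2 - u 2 * v 1), (u 0 * v 1 - u 1 * v 0) + (u 0 * v 2 - u 2 * v 0),
    u 0 * v 2 - u 2 * v 0]

/-- The form of `B₋₁`: the bilinear extension of `ω(x,y) = ω(x,z) = 0`, `ω(y,z) = -2`. -/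
def omBm1 (u v : Fin 3 → ℂ) : ℂ := -2 * (u 1 * v 2 - u 2 * v 1)

def scaleYZ (c : ℂˣ) : (Fin 3 → ℂ) ≃ₗ[ℂ] (Fin 3 → ℂ) :=
  LinearEquiv.piCongrRight fun i => LinearEquiv.smulOfUnit (![1, c, c] i)

@[simp] lemma scaleYZ_apply (c : ℂˣ) (u : Fin 3 → ℂ) :
    scaleYZ c u = ![u 0, c * u 1, c * u 2] := by
  ext i
  fin_cases i <;> simp [scaleYZ, LinearEquiv.smulOfUnit, Units.smul_def]

lemma scaleYZ_brB1 {c : ℂˣ} (hc : (c : ℂ) ^ 2 = -1) (a b : Fin 3 → ℂ) :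
    scaleYZ c (brB1 a b) = brBm1 (scaleYZ c a) (scaleYZ c b) := by
  ext i
  fin_cases i <;>
    simp only [brB1, brBm1, scaleYZ_apply, Fin.isValue, Fin.zero_eta, Fin.mk_one, Fin.reduceFinMk,
      Matrix.cons_val_zero, Matrix.cons_val_one, Matrix.cons_val]
  · linear_combination (a 1 * b 2 - a 2 * b 1) * hc
  · ring
  · ring

lemma omBm1_scaleYZ {c : ℂˣ} (hc : (c : ℂ) ^ 2 = -1) (a b : Fin 3 → ℂ) :
    omBm1 (scaleYZ c a) (scaleYZ c b) = omB1 a b := by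
  simp only [omBm1, omB1, scaleYZ_apply, Fin.isValue, Matrix.cons_val_one, Matrix.cons_val_zero,
    Matrix.cons_val]
  linear_combination (-2 * (a 1 * b 2 - a 2 * b 1)) * hc

/-- The complex ω-Lie algebras `B₁` and `B₋₁` are isomorphic: there is a complex linear
bijection intertwining the brackets and the bilinear forms. -/
theorem B1_iso_Bm1_complex :
    ∃ f : (Fin 3 → ℂ) ≃ₗ[ℂ] (Fin 3 → ℂ),
      (∀ a b : Fin 3 → ℂ, f (brB1 a b) = brBm1 (f a) (f b)) ∧
      (∀ a b : Fin 3 → ℂ, omBm1 (f a) (f b) = omB1 a b) := by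
  have hI : ((Units.mk0 Complex.I Complex.I_ne_zero : ℂˣ) : ℂ) ^ 2 = -1 := Complex.I_sq
  exact ⟨scaleYZ _, scaleYZ_brB1 hI, omBm1_scaleYZ hI⟩
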